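/- Let D ∈ L(K,H) with ‖D‖ = 1, and let γ(t) = Th(tD). Then γ is differentiable and satisfies the differential equation γ'(t) = D - γ(t) D* γ(t). -/

import Mathlib

/-! Write `A = |D|` and `T = tanh(t A)`. Since `1 - tanh²` is Lipschitz, the difference quotients
of `s ↦ tanh(s x)` converge to `x (1 - tanh²(t x))` uniformly on the compact spectrum of `A`, so by
continuity of the functional calculus `s ↦ tanh(s A)` has derivative `A (1 - T²)`. On the other
side, `D* = A J*` and `A J* J = A` give `γ D* γ = J T A T`, hence `D - γ D* γ = J A (1 - T²)`. -/

open ContinuousLinearMap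

variable {K H : Type*}
  [NormedAddCommGroup H] [InnerProductSpace ℂ H] [CompleteSpace H]
  [NormedAddCommGroup K] [InnerProductSpace ℂ K] [CompleteSpace K]

/-- The square root of a (positive) operator, via continuous functional calculus. -/
noncomputable def opSqrt {E : Type*} [NormedAddCommGroup E] [InnerProductSpace ℂ E]
    [CompleteSpace E] (T : E →L[ℂ] E) : E →L[ℂ] E := cfc Real.sqrt T

/-- The inverse square root of a (positive invertible) operator. -/
noncomputable def opInvSqrt {E : Type*} [NormedAddCommGroup E] [InnerProductSpace ℂ E]
    [CompleteSpace E] (T : E →L[ℂ] E) : E →L[ℂ] E := cfc (fun x : ℝ => (Real.sqrt x)⁻¹) T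

/-- The absolute value |D| = (D*D)^{1/2} of an operator D : K → H. -/
noncomputable def absOp (D : K →L[ℂ] H) : K →L[ℂ] K := opSqrt (adjoint D ∘L D)

open Filter Topology NNReal

theorem norm_sub_sub_smul_le_of_lipschitzWith_deriv {E : Type*} [NormedAddCommGroup E]
    [NormedSpace ℝ E] {f f' : ℝ → E} {L : ℝ≥0} (hf : ∀ x, HasDerivAt f (f' x) x)
    (hf' : LipschitzWith L f') (a b : ℝ) :
    ‖f b - f a - (b - a) • f' a‖ ≤ L * (b - a) ^ 2 := by
  have hφ : ∀ x ∈ Set.uIcc a b, HasDerivWithinAt (fun x => f x - x • f' a) (f' x - f' a)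
      (Set.uIcc a b) x := fun x _ =>
    ((hf x).sub ((hasDerivAt_id x).smul_const (f' a))).hasDerivWithinAt.congr_deriv
      (by rw [one_smul])
  have hbound : ∀ x ∈ Set.uIcc a b, ‖f' x - f' a‖ ≤ L * |b - a| := fun x hx =>
    dist_eq_norm (f' x) (f' a) ▸ (hf'.dist_le_mul x a).trans <|
      mul_le_mul_of_nonneg_left (Set.abs_sub_left_of_mem_uIcc hx) L.coe_nonneg
  calc ‖f b - f a - (b - a) • f' a‖ = ‖(f b - b • f' a) - (f a - a • f' a)‖ := by
        rw [sub_smul]; congr 1; abel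
    _ ≤ L * |b - a| * ‖b - a‖ := Convex.norm_image_sub_le_of_norm_hasDerivWithin_le hφ hbound
        (convex_uIcc a b) Set.left_mem_uIcc Set.right_mem_uIcc
    _ = L * (b - a) ^ 2 := by rw [Real.norm_eq_abs, mul_assoc, abs_mul_abs_self, sq]

theorem tendstoUniformlyOn_slope_comp_mul {g g' : ℝ → ℝ} {L : ℝ≥0}
    (hg : ∀ y, HasDerivAt g (g' y) y) (hg' : LipschitzWith L g') {S : Set ℝ}
    (hS : Bornology.IsBounded S) (t : ℝ) :
    TendstoUniformlyOn (fun s x => slope (fun s => g (s * x)) t s) (fun x => x * g' (t * x))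
      (𝓝[≠] t) S := by
  obtain ⟨R, hR⟩ := hS.exists_norm_le
  rw [Metric.tendstoUniformlyOn_iff]
  intro ε hε
  have hsmall : ∀ᶠ s in 𝓝 t, L * R ^ 2 * |s - t| < ε := by
    have : Tendsto (fun s => L * R ^ 2 * |s - t|) (𝓝 t) (𝓝 0) := by
      have hcont : Continuous fun s => L * R ^ 2 * |s - t| := by fun_prop
      simpa using hcont.tendsto t
    exact this.eventually (gt_mem_nhds hε)
  filter_upwards [nhdsWithin_le_nhds hsmall, self_mem_nhdsWithin] with s hs hst x hx
  have hst' : s - t ≠ 0 := sub_ne_zero.2 hst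
  have hx2 : x ^ 2 ≤ R ^ 2 := by
    simpa [sq_abs] using pow_le_pow_left₀ (abs_nonneg x) (hR x hx) 2
  have key := norm_sub_sub_smul_le_of_lipschitzWith_deriv hg hg' (t * x) (s * x)
  calc dist (x * g' (t * x)) (slope (fun s => g (s * x)) t s)
      = |s - t|⁻¹ * |g (s * x) - g (t * x) - (s * x - t * x) • g' (t * x)| := by
        rw [Real.dist_eq, slope_def_field, ← abs_inv, ← abs_mul, ← abs_neg, smul_eq_mul]
        congr 1
        field_simp
        ring
    _ ≤ |s - t|⁻¹ * (L * (s * x - t * x) ^ 2) := by gcongr; exact key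
    _ = L * x ^ 2 * |s - t| := by
        rw [← sub_mul, mul_pow, ← sq_abs (s - t)]
        field_simp
    _ ≤ L * R ^ 2 * |s - t| := by gcongr
    _ < ε := hs

theorem hasDerivAt_cfc_fun {𝕜 A : Type*} {p : A → Prop} [RCLike 𝕜] [NormedRing A] [StarRing A]
    [NormedAlgebra 𝕜 A] [ContinuousFunctionalCalculus 𝕜 A p] {f : 𝕜 → 𝕜 → 𝕜} {f' : 𝕜 → 𝕜}
    {a : A} {t : 𝕜} (hf : ∀ s, ContinuousOn (f s) (spectrum 𝕜 a))
    (h_slope : TendstoUniformlyOn (fun s x => slope (f · x) t s) f' (𝓝[≠] t) (spectrum 𝕜 a)) :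
    HasDerivAt (fun s => cfc (f s) a) (cfc f' a) t := by
  rw [hasDerivAt_iff_tendsto_slope]
  have hcfc_slope : ∀ s, slope (fun s => cfc (f s) a) t s = cfc (fun x => slope (f · x) t s) a :=
    fun s => by
      simp only [slope_def_module]
      rw [cfc_smul _ (fun x => f s x - f t x) a ((hf s).sub (hf t)),
        cfc_sub _ _ a (hf s) (hf t)]
  refine (tendsto_cfc_fun h_slope (Eventually.of_forall fun s => ?_)).congr
    fun s => (hcfc_slope s).symm
  simp only [slope_def_module]
  exact ((hf s).sub (hf t)).const_smul (s - t)⁻¹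

theorem hasDerivAt_cfc_comp_mul {A : Type*} {p : A → Prop} [NormedRing A] [StarRing A]
    [NormedAlgebra ℝ A] [ContinuousFunctionalCalculus ℝ A p] {g g' : ℝ → ℝ} {L : ℝ≥0}
    (hg : ∀ y, HasDerivAt g (g' y) y) (hg' : LipschitzWith L g') (a : A) (t : ℝ) :
    HasDerivAt (fun s => cfc (fun x => g (s * x)) a) (cfc (fun x => x * g' (t * x)) a) t :=
  hasDerivAt_cfc_fun
    (fun s => ((continuous_iff_continuousAt.2 fun y => (hg y).continuousAt).comp
      (continuous_const_mul s)).continuousOn)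
    (tendstoUniformlyOn_slope_comp_mul hg hg'
      (ContinuousFunctionalCalculus.isCompact_spectrum a).isBounded t)

namespace Real

theorem hasDerivAt_tanh (x : ℝ) : HasDerivAt tanh (1 - tanh x ^ 2) x := by
  have hcosh : cosh x ≠ 0 := (cosh_pos x).ne'
  have h := (hasDerivAt_sinh x).div (hasDerivAt_cosh x) hcosh
  rw [show sinh / cosh = tanh from funext fun y => (tanh_eq_sinh_div_cosh y).symm] at h
  refine h.congr_deriv ?_
  rw [tanh_eq_sinh_div_cosh]
  field_simp

theorem differentiable_tanh : Differentiable ℝ tanh :=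
  fun x => (hasDerivAt_tanh x).differentiableAt

theorem lipschitzWith_tanh : LipschitzWith 1 tanh :=
  lipschitzWith_of_nnnorm_deriv_le differentiable_tanh fun x => by
    rw [(hasDerivAt_tanh x).deriv, ← NNReal.coe_le_coe, coe_nnnorm, Real.norm_eq_abs,
      NNReal.coe_one, abs_of_pos (sub_pos.2 (tanh_sq_lt_one x))]
    linarith [sq_nonneg (tanh x)]

theorem lipschitzWith_one_sub_tanh_sq : LipschitzWith 2 fun x => 1 - tanh x ^ 2 :=
  LipschitzWith.of_dist_le_mul fun x y => by
    have hxy : |tanh x - tanh y| ≤ |x - y| := by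
      simpa [Real.dist_eq] using lipschitzWith_tanh.dist_le_mul x y
    have hsum : |tanh x + tanh y| ≤ 2 := (abs_add_le _ _).trans <| by
      linarith [(abs_tanh_lt_one x).le, (abs_tanh_lt_one y).le]
    calc dist (1 - tanh x ^ 2) (1 - tanh y ^ 2) = |tanh x + tanh y| * |tanh x - tanh y| := by
          rw [Real.dist_eq, ← abs_mul, ← abs_neg]; congr 1; ring
      _ ≤ 2 * |x - y| := mul_le_mul hsum hxy (abs_nonneg _) zero_le_two
      _ = ((2 : ℝ≥0) : ℝ) * dist x y := by rw [Real.dist_eq]; rfl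

end Real

theorem sub_comp_adjoint_comp_eq_cfc {D J : K →L[ℂ] H} {A : K →L[ℂ] K} (hA : IsSelfAdjoint A)
    (hD : D = J ∘L A) (hJ : A ∘L (adjoint J ∘L J) = A) {f : ℝ → ℝ}
    (hf : ContinuousOn f (spectrum ℝ A)) :
    D - (J ∘L cfc f A) ∘L adjoint D ∘L (J ∘L cfc f A) =
      J ∘L cfc (fun x => x * (1 - f x ^ 2)) A := by
  have hadjoint : adjoint D = A ∘L adjoint J := by
    rw [hD, adjoint_comp, ← star_eq_adjoint A, hA.star_eq]
  have hmiddle : cfc f A ∘L A ∘L cfc f A = cfc (fun x => f x * (x * f x)) A := by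
    rw [cfc_mul f (fun x => x * f x) A hf ((continuousOn_id' _).mul hf),
      cfc_mul (fun x => x) f A (continuousOn_id' _) hf, cfc_id' ℝ A]
    rfl
  calc D - (J ∘L cfc f A) ∘L adjoint D ∘L (J ∘L cfc f A)
      = J ∘L (A - cfc f A ∘L (A ∘L (adjoint J ∘L J)) ∘L cfc f A) := by
        rw [hadjoint, comp_sub, hD]; rfl
    _ = J ∘L (cfc (fun x => x) A - cfc (fun x => f x * (x * f x)) A) := by
        rw [hJ, cfc_id' ℝ A, ← hmiddle]
    _ = J ∘L cfc (fun x => x * (1 - f x ^ 2)) A := by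
        rw [← cfc_sub (fun x => x) (fun x => f x * (x * f x)) A (continuousOn_id' _)
          (hf.mul ((continuousOn_id' _).mul hf))]
        congr 1
        exact cfc_congr fun x _ => by ring

theorem isSelfAdjoint_absOp (D : K →L[ℂ] H) : IsSelfAdjoint (absOp D) :=
  cfc_predicate Real.sqrt _

theorem thOp_hasDerivAt_general (D J : K →L[ℂ] H)
    (hpolar : D = J ∘L absOp D)
    (hJ2 : absOp D ∘L (adjoint J ∘L J) = absOp D) :
    ∀ t : ℝ,
      HasDerivAt (fun s : ℝ => J ∘L cfc (fun x : ℝ => Real.tanh (s * x)) (absOp D))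
        (D - (J ∘L cfc (fun x : ℝ => Real.tanh (t * x)) (absOp D)) ∘L adjoint D ∘L
          (J ∘L cfc (fun x : ℝ => Real.tanh (t * x)) (absOp D))) t := by
  intro t
  have hT := hasDerivAt_cfc_comp_mul Real.hasDerivAt_tanh Real.lipschitzWith_one_sub_tanh_sq
    (absOp D) t
  have htanh : Continuous fun x => Real.tanh (t * x) :=
    Real.differentiable_tanh.continuous.comp (continuous_const_mul t)
  rw [sub_comp_adjoint_comp_eq_cfc (isSelfAdjoint_absOp D) hpolar hJ2 htanh.continuousOn]
  exact ((compL ℂ K K H J).restrictScalars ℝ).hasFDerivAt.comp_hasDerivAt t hT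

/-- The curve γ(t) = Th(tD) = J tanh(t|D|) is differentiable and satisfies
γ'(t) = D - γ(t) D* γ(t). -/
theorem thOp_hasDerivAt (D J : K →L[ℂ] H) (hD : ‖D‖ = 1)
    (hpolar : D = J ∘L absOp D)
    (hJ1 : adjoint J ∘L J ∘L absOp D = absOp D)
    (hJ2 : absOp D ∘L (adjoint J ∘L J) = absOp D) :
    ∀ t : ℝ,
      HasDerivAt (fun s : ℝ => J ∘L cfc (fun x : ℝ => Real.tanh (s * x)) (absOp D))
        (D - (J ∘L cfc (fun x : ℝ => Real.tanh (t * x)) (absOp D)) ∘L adjoint D ∘L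
          (J ∘L cfc (fun x : ℝ => Real.tanh (t * x)) (absOp D))) t :=
  thOp_hasDerivAt_general D J hpolar hJ2
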